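/- arXiv:0806.4271 — 8 statements merged into one kernel-verified Lean document; each statement's English description precedes it below -/
import Mathlib

section
/- If P is a prime element of the ring *ℤ (an ultrapower of ℤ by a nonprincipal ultrafilter on ℕ) that is infinite (i.e., |P| > n for every standard natural number n), then the quotient ring *ℤ/P·*ℤ is a field of characteristic zero. -/
/-! If `P = [p]` is prime in `*ℤ`, then `p i` is prime for `𝒰`-almost all `i`: otherwise `p i`
factors as a product of two nonunits almost everywhere, and `P` would have to divide one of the
factor sequences, which is absurd componentwise. For `X ∉ (P)` the components `p i` and `x i` are
then coprime almost everywhere, and Bézout coefficients chosen componentwise invert `X` modulo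
`P`. Finally `P ∣ n` for a standard `n ≠ 0` would force `|p i| ≤ n` almost everywhere. -/

theorem isUnit_of_dvd_of_eq_mul {M : Type*} [CommMonoidWithZero M] [IsCancelMulZero M]
    {x a b : M} (hx : x ≠ 0) (hab : x = a * b) (h : x ∣ a) : IsUnit b := by
  subst hab
  exact isUnit_of_dvd_one <| (mul_dvd_mul_iff_left (left_ne_zero_of_mul hx)).1 <| by rwa [mul_one]

theorem exists_eq_mul_of_not_prime {M : Type*} [CommMonoidWithZero M] [IsCancelMulZero M]
    [DecompositionMonoid M] {x : M} (hu : ¬IsUnit x) (hx : ¬Prime x) :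
    ∃ a b : M, x = a * b ∧ ¬IsUnit a ∧ ¬IsUnit b := by
  rw [← irreducible_iff_prime, irreducible_iff] at hx
  push Not at hx
  simpa only [and_assoc] using hx hu

theorem Ideal.isMaximal_span_singleton_of_isCoprime {R : Type*} [CommRing R] {p : R}
    (hp : ¬IsUnit p) (hcop : ∀ x, ¬p ∣ x → IsCoprime p x) : (Ideal.span {p}).IsMaximal := by
  refine Ideal.isMaximal_iff.2 ⟨?_, fun I x hpI hx hxI => ?_⟩
  · rwa [Ideal.mem_span_singleton, ← isUnit_iff_dvd_one]
  · obtain ⟨u, v, huv⟩ := hcop x (by rwa [← Ideal.mem_span_singleton])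
    rw [← huv]
    exact I.add_mem (I.mul_mem_left u (hpI (Ideal.mem_span_singleton_self p)))
      (I.mul_mem_left v hxI)

namespace ReducedProduct

variable {ι R : Type*} [CommRing R] {l : Filter ι} {J : Ideal (ι → R)}
  (hJ : ∀ x : ι → R, x ∈ J ↔ ∀ᶠ i in l, x i = 0)
include hJ

theorem mk_eq_zero_iff {x : ι → R} : Ideal.Quotient.mk J x = 0 ↔ ∀ᶠ i in l, x i = 0 :=
  Ideal.Quotient.eq_zero_iff_mem.trans (hJ x)

theorem mk_eq_mk_iff {x y : ι → R} :
    Ideal.Quotient.mk J x = Ideal.Quotient.mk J y ↔ ∀ᶠ i in l, x i = y i := by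
  simp only [Ideal.Quotient.eq, hJ, Pi.sub_apply, sub_eq_zero]

theorem mk_dvd_mk_iff {x y : ι → R} :
    Ideal.Quotient.mk J x ∣ Ideal.Quotient.mk J y ↔ ∀ᶠ i in l, x i ∣ y i := by
  constructor
  · rintro ⟨c, hc⟩
    obtain ⟨c, rfl⟩ := Ideal.Quotient.mk_surjective c
    rw [← map_mul, mk_eq_mk_iff hJ] at hc
    exact hc.mono fun i hi => ⟨c i, hi⟩
  · intro h
    obtain ⟨c, hc⟩ := Filter.skolem.1 h
    exact ⟨Ideal.Quotient.mk J c, by rw [← map_mul, mk_eq_mk_iff hJ]; exact hc⟩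

theorem isUnit_mk_iff {x : ι → R} :
    IsUnit (Ideal.Quotient.mk J x) ↔ ∀ᶠ i in l, IsUnit (x i) := by
  simp only [isUnit_iff_dvd_one, ← map_one (Ideal.Quotient.mk J), mk_dvd_mk_iff hJ,
    Pi.one_apply]

theorem isCoprime_mk {x y : ι → R} (h : ∀ᶠ i in l, IsCoprime (x i) (y i)) :
    IsCoprime (Ideal.Quotient.mk J x) (Ideal.Quotient.mk J y) := by
  obtain ⟨u, hu⟩ := Filter.skolem.1 h
  obtain ⟨v, huv⟩ := Filter.skolem.1 hu
  refine ⟨Ideal.Quotient.mk J u, Ideal.Quotient.mk J v, ?_⟩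
  rw [← map_mul, ← map_mul, ← map_add, ← map_one (Ideal.Quotient.mk J), mk_eq_mk_iff hJ]
  exact huv

end ReducedProduct

namespace Ultraproduct

open ReducedProduct

variable {ι R : Type*} [CommRing R] {𝒰 : Ultrafilter ι} {J : Ideal (ι → R)}
  (hJ : ∀ x : ι → R, x ∈ J ↔ ∀ᶠ i in 𝒰, x i = 0)
include hJ

theorem eventually_prime_of_prime_mk [IsDomain R] [DecompositionMonoid R] {p : ι → R}
    (hp : Prime (Ideal.Quotient.mk J p)) : ∀ᶠ i in 𝒰, Prime (p i) := by
  have hne : ∀ᶠ i in 𝒰, p i ≠ 0 :=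
    Ultrafilter.eventually_not.2 ((mk_eq_zero_iff hJ).not.1 hp.ne_zero)
  have hnu : ∀ᶠ i in 𝒰, ¬IsUnit (p i) :=
    Ultrafilter.eventually_not.2 ((isUnit_mk_iff hJ).not.1 hp.not_isUnit)
  by_contra hprime
  have hfactor : ∀ᶠ i in 𝒰, ∃ a b, p i = a * b ∧ ¬IsUnit a ∧ ¬IsUnit b := by
    filter_upwards [Ultrafilter.eventually_not.2 hprime, hnu] with i hi hu
    exact exists_eq_mul_of_not_prime hu hi
  obtain ⟨a, hab⟩ := Filter.skolem.1 hfactor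
  obtain ⟨b, hab⟩ := Filter.skolem.1 hab
  have hdvd : Ideal.Quotient.mk J p ∣ Ideal.Quotient.mk J a * Ideal.Quotient.mk J b := by
    rw [← map_mul, mk_dvd_mk_iff hJ]
    exact hab.mono fun i hi => hi.1 ▸ dvd_rfl
  rcases hp.dvd_or_dvd hdvd with hpa | hpb
  · obtain ⟨i, hpa, hne, heq, -, hb⟩ := (((mk_dvd_mk_iff hJ).1 hpa).and (hne.and hab)).exists
    exact hb (isUnit_of_dvd_of_eq_mul hne heq hpa)
  · obtain ⟨i, hpb, hne, heq, ha, -⟩ := (((mk_dvd_mk_iff hJ).1 hpb).and (hne.and hab)).exists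
    exact ha (isUnit_of_dvd_of_eq_mul hne (heq.trans (mul_comm _ _)) hpb)

theorem isMaximal_span_mk [IsDomain R] [DecompositionMonoid R] [IsBezout R] {p : ι → R}
    (hp : Prime (Ideal.Quotient.mk J p)) : (Ideal.span {Ideal.Quotient.mk J p}).IsMaximal := by
  refine Ideal.isMaximal_span_singleton_of_isCoprime hp.not_isUnit fun y hy => ?_
  obtain ⟨x, rfl⟩ := Ideal.Quotient.mk_surjective y
  refine isCoprime_mk hJ ?_
  filter_upwards [eventually_prime_of_prime_mk hJ hp,
    Ultrafilter.eventually_not.2 ((mk_dvd_mk_iff hJ).not.1 hy)] with i hpi hxi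
  exact hpi.coprime_iff_not_dvd.2 hxi

end Ultraproduct

theorem ReducedProduct.charZero_quotient_span_mk {ι : Type*} {l : Filter ι} [l.NeBot]
    {J : Ideal (ι → ℤ)} (hJ : ∀ x : ι → ℤ, x ∈ J ↔ ∀ᶠ i in l, x i = 0) {p : ι → ℤ}
    (hinf : ∀ n : ℕ, ∀ᶠ i in l, (n : ℤ) < |p i|) :
    CharZero (((ι → ℤ) ⧸ J) ⧸ Ideal.span {Ideal.Quotient.mk J p}) := by
  refine charZero_of_inj_zero fun n hn => ?_
  rw [← map_natCast (Ideal.Quotient.mk _), ← map_natCast (Ideal.Quotient.mk J),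
    Ideal.Quotient.eq_zero_iff_dvd, mk_dvd_mk_iff hJ] at hn
  obtain ⟨i, hdvd, hlt⟩ := (hn.and (hinf n)).exists
  rw [Pi.natCast_apply] at hdvd
  rw [Int.abs_eq_natAbs] at hlt
  exact_mod_cast Int.eq_zero_of_dvd_of_natAbs_lt_natAbs hdvd (by omega)

theorem quotient_starInt_by_infinite_prime_general
    (𝒰 : Ultrafilter ℕ)
    (J : Ideal (ℕ → ℤ)) (hJ : ∀ x : ℕ → ℤ, x ∈ J ↔ {i | x i = 0} ∈ 𝒰)
    (p : ℕ → ℤ) (hp : Prime (Ideal.Quotient.mk J p))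
    (hinf : ∀ n : ℕ, {i | (n : ℤ) < |p i|} ∈ 𝒰) :
    IsField (((ℕ → ℤ) ⧸ J) ⧸ Ideal.span {Ideal.Quotient.mk J p}) ∧
    CharZero (((ℕ → ℤ) ⧸ J) ⧸ Ideal.span {Ideal.Quotient.mk J p}) :=
  ⟨(Ideal.Quotient.maximal_ideal_iff_isField_quotient _).1 (Ultraproduct.isMaximal_span_mk hJ hp),
    ReducedProduct.charZero_quotient_span_mk hJ hinf⟩

/-- **Quotient of `*ℤ` by an infinite prime.**  Let `*ℤ` be the ultrapower `ℤ^ℕ/𝒰`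
for a nonprincipal ultrafilter `𝒰` on `ℕ`, realized as the quotient of `ℕ → ℤ` by the
ideal `J` of sequences vanishing `𝒰`-a.e.  If `P = [p]` is a prime element of `*ℤ`
which is infinite (i.e. `|P| > n` for every standard `n`, meaning
`{i | n < |p i|} ∈ 𝒰` for all `n : ℕ`), then `*ℤ / P·*ℤ` is a field of
characteristic zero. -/
theorem quotient_starInt_by_infinite_prime
    (𝒰 : Ultrafilter ℕ) (h𝒰 : ∀ a : ℕ, 𝒰 ≠ pure a)
    (J : Ideal (ℕ → ℤ)) (hJ : ∀ x : ℕ → ℤ, x ∈ J ↔ {i | x i = 0} ∈ 𝒰)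
    (p : ℕ → ℤ) (hp : Prime (Ideal.Quotient.mk J p))
    (hinf : ∀ n : ℕ, {i | (n : ℤ) < |p i|} ∈ 𝒰) :
    IsField (((ℕ → ℤ) ⧸ J) ⧸ Ideal.span {Ideal.Quotient.mk J p}) ∧
    CharZero (((ℕ → ℤ) ⧸ J) ⧸ Ideal.span {Ideal.Quotient.mk J p}) :=
  quotient_starInt_by_infinite_prime_general 𝒰 J hJ p hp hinf
end

section
/- Let P = Σ_{|ν|≤d} a_ν X^ν be an internal polynomial over *ℂ of finite (standard) degree d in n variables. Then P is a bounded polynomial (maps bounded points of *ℂⁿ to bounded points of *ℂ) if and only if every coefficient a_ν is a bounded element of *ℂ; and P is infinitesimal (maps bounded points to infinitesimal points) if and only if every coefficient a_ν is infinitesimal. -/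
/-!
On polynomials of total degree at most `d` in finitely many variables over an infinite field,
the evaluation functionals span the dual space (a polynomial vanishing everywhere is zero), so
each coefficient is a fixed finite linear combination of values at standard points. Conversely
the value at a point is a sum, over the finitely many exponents of degree at most `d`, of a
coefficient times a monomial in the coordinates. Read along `𝒰`, "bounded" and
"infinitesimal" are `O(1)` and `o(1)`, and both implications become closure of these classes
under finite sums and under products with `O(1)`.
-/

open Filter

/-- A sequence representing a point of `*ℂ` is *bounded* if its absolute value is
`𝒰`-a.e. at most some standard natural number. -/
def BddSeq (𝒰 : Ultrafilter ℕ) (x : ℕ → ℂ) : Prop :=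
  ∃ m : ℕ, ∀ᶠ i in (𝒰 : Filter ℕ), ‖x i‖ ≤ (m : ℝ)

/-- A sequence representing a point of `*ℂ` is *infinitesimal* if its absolute value is
`𝒰`-a.e. at most `ε` for every standard `ε > 0`. -/
def InfmlSeq (𝒰 : Ultrafilter ℕ) (x : ℕ → ℂ) : Prop :=
  ∀ ε : ℝ, 0 < ε → ∀ᶠ i in (𝒰 : Filter ℕ), ‖x i‖ ≤ ε

open Asymptotics

namespace MvPolynomial

variable {σ K : Type*} [Field K]

theorem exists_coeff_eq_sum_eval [Finite σ] [Infinite K] (d : ℕ) (ν : σ →₀ ℕ) :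
    ∃ c : (σ → K) →₀ K, ∀ q : MvPolynomial σ K, q.totalDegree ≤ d →
      q.coeff ν = c.sum fun a r => r * eval a q := by
  let V := restrictTotalDegree σ K d
  let evalV : (σ → K) → V →ₗ[K] K := fun a => (aeval a).toLinearMap ∘ₗ V.subtype
  have hker : ⨅ a, LinearMap.ker (evalV a) ≤ LinearMap.ker (lcoeff K ν ∘ₗ V.subtype) := by
    intro q hq
    have hq0 : (q : MvPolynomial σ K) = 0 :=
      funext fun a => by simpa [evalV] using (Submodule.mem_iInf _).1 hq a
    simp [hq0]
  obtain ⟨c, hc⟩ := Finsupp.mem_span_range_iff_exists_finsupp.1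
    (FiniteDimensional.mem_span_of_iInf_ker_le_ker hker)
  refine ⟨c, fun q hq => ?_⟩
  have := LinearMap.congr_fun hc ⟨q, (mem_restrictTotalDegree _ _ _).2 hq⟩
  simpa [evalV, Finsupp.sum, LinearMap.sum_apply, mul_comm] using this.symm

theorem eval_eq_sum_degree_le {R : Type*} [CommSemiring R] [Fintype σ] {d : ℕ}
    {q : MvPolynomial σ R} (hq : q.totalDegree ≤ d) (x : σ → R) :
    eval x q = ∑ ν ∈ (Finsupp.finite_of_degree_le d).toFinset, q.coeff ν * ∏ k, x k ^ ν k := by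
  rw [eval_eq']
  refine Finset.sum_subset (fun ν hν => ?_) (fun ν _ hν => ?_)
  · exact (Set.Finite.mem_toFinset _).2 ((le_totalDegree hν).trans hq)
  · rw [notMem_support_iff.1 hν, zero_mul]

variable {ι 𝕜 : Type*} [NormedField 𝕜] {l : Filter ι} {p : ι → MvPolynomial σ 𝕜} {d : ℕ}

theorem exists_coeff_eventuallyEq_sum_eval [Finite σ] [Infinite 𝕜]
    (hdeg : ∀ᶠ i in l, (p i).totalDegree ≤ d) (ν : σ →₀ ℕ) :
    ∃ c : (σ → 𝕜) →₀ 𝕜,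
      (fun i => (p i).coeff ν) =ᶠ[l] fun i => ∑ a ∈ c.support, c a * eval a (p i) := by
  obtain ⟨c, hc⟩ := exists_coeff_eq_sum_eval (K := 𝕜) d ν
  exact ⟨c, by filter_upwards [hdeg] with i hi using hc _ hi⟩

theorem isBigO_coeff_of_isBigO_eval [Finite σ] [Infinite 𝕜] {F : Type*} [Norm F] {g : ι → F}
    (hdeg : ∀ᶠ i in l, (p i).totalDegree ≤ d) (heval : ∀ a, (fun i => eval a (p i)) =O[l] g)
    (ν : σ →₀ ℕ) : (fun i => (p i).coeff ν) =O[l] g := by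
  obtain ⟨c, hc⟩ := exists_coeff_eventuallyEq_sum_eval hdeg ν
  exact hc.trans_isBigO (IsBigO.fun_sum fun a _ => (heval a).const_mul_left (c a))

theorem isLittleO_coeff_of_isLittleO_eval [Finite σ] [Infinite 𝕜] {F : Type*}
    [NormedAddCommGroup F] {g : ι → F}
    (hdeg : ∀ᶠ i in l, (p i).totalDegree ≤ d) (heval : ∀ a, (fun i => eval a (p i)) =o[l] g)
    (ν : σ →₀ ℕ) : (fun i => (p i).coeff ν) =o[l] g := by
  obtain ⟨c, hc⟩ := exists_coeff_eventuallyEq_sum_eval hdeg ν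
  exact hc.trans_isLittleO (IsLittleO.fun_sum fun a _ => (heval a).const_mul_left (c a))

theorem eval_eventuallyEq_sum_degree_le [Fintype σ] (hdeg : ∀ᶠ i in l, (p i).totalDegree ≤ d)
    (z : σ → ι → 𝕜) :
    (fun i => eval (z · i) (p i)) =ᶠ[l] fun i =>
      ∑ ν ∈ (Finsupp.finite_of_degree_le d).toFinset, (p i).coeff ν * ∏ k, z k i ^ ν k := by
  filter_upwards [hdeg] with i hi using eval_eq_sum_degree_le hi _

theorem isBigO_monomial_eval [Fintype σ] {z : σ → ι → 𝕜} (hz : ∀ k, z k =O[l] fun _ => (1 : 𝕜))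
    (ν : σ →₀ ℕ) : (fun i => ∏ k, z k i ^ ν k) =O[l] fun _ => (1 : 𝕜) := by
  simpa using IsBigO.finsetProd (s := Finset.univ) fun k _ => (hz k).pow (ν k)

theorem isBigO_eval_of_isBigO_coeff [Fintype σ] {g : ι → 𝕜}
    (hdeg : ∀ᶠ i in l, (p i).totalDegree ≤ d)
    (hcoeff : ∀ ν : σ →₀ ℕ, ν.degree ≤ d → (fun i => (p i).coeff ν) =O[l] g)
    {z : σ → ι → 𝕜} (hz : ∀ k, z k =O[l] fun _ => (1 : 𝕜)) :
    (fun i => eval (z · i) (p i)) =O[l] g := by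
  refine (eval_eventuallyEq_sum_degree_le hdeg z).trans_isBigO (IsBigO.fun_sum fun ν hν => ?_)
  simpa using (hcoeff ν (by simpa using hν)).mul (isBigO_monomial_eval hz ν)

theorem isLittleO_eval_of_isLittleO_coeff [Fintype σ] {g : ι → 𝕜}
    (hdeg : ∀ᶠ i in l, (p i).totalDegree ≤ d)
    (hcoeff : ∀ ν : σ →₀ ℕ, ν.degree ≤ d → (fun i => (p i).coeff ν) =o[l] g)
    {z : σ → ι → 𝕜} (hz : ∀ k, z k =O[l] fun _ => (1 : 𝕜)) :
    (fun i => eval (z · i) (p i)) =o[l] g := by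
  refine (eval_eventuallyEq_sum_degree_le hdeg z).trans_isLittleO (IsLittleO.fun_sum fun ν hν => ?_)
  simpa using (hcoeff ν (by simpa using hν)).mul_isBigO (isBigO_monomial_eval hz ν)

end MvPolynomial

theorem bddSeq_iff_isBigO {𝒰 : Ultrafilter ℕ} {x : ℕ → ℂ} :
    BddSeq 𝒰 x ↔ x =O[(𝒰 : Filter ℕ)] fun _ => (1 : ℂ) := by
  rw [isBigO_one_iff]
  constructor
  · rintro ⟨m, hm⟩
    exact ⟨m, hm⟩
  · rintro ⟨b, hb⟩
    obtain ⟨m, hm⟩ := exists_nat_ge b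
    exact ⟨m, hb.mono fun i hi => hi.trans hm⟩

theorem infmlSeq_iff_isLittleO {𝒰 : Ultrafilter ℕ} {x : ℕ → ℂ} :
    InfmlSeq 𝒰 x ↔ x =o[(𝒰 : Filter ℕ)] fun _ => (1 : ℂ) := by
  simp only [isLittleO_iff, norm_one, mul_one, InfmlSeq]

theorem finite_degree_internal_polynomial_bounded_iff_coeffs_general
    (𝒰 : Ultrafilter ℕ) (n d : ℕ)
    (p : ℕ → MvPolynomial (Fin n) ℂ)
    (hdeg : ∀ᶠ i in (𝒰 : Filter ℕ), (p i).totalDegree ≤ d) :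
    ((∀ z : Fin n → ℕ → ℂ, (∀ k, BddSeq 𝒰 (z k)) →
        BddSeq 𝒰 fun i => MvPolynomial.eval (fun k => z k i) (p i)) ↔
      (∀ ν : Fin n →₀ ℕ, (ν.sum fun _ e => e) ≤ d →
        BddSeq 𝒰 fun i => (p i).coeff ν)) ∧
    ((∀ z : Fin n → ℕ → ℂ, (∀ k, BddSeq 𝒰 (z k)) →
        InfmlSeq 𝒰 fun i => MvPolynomial.eval (fun k => z k i) (p i)) ↔
      (∀ ν : Fin n →₀ ℕ, (ν.sum fun _ e => e) ≤ d →
        InfmlSeq 𝒰 fun i => (p i).coeff ν)) := by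
  simp only [bddSeq_iff_isBigO, infmlSeq_iff_isLittleO]
  have hconst (a : Fin n → ℂ) (k : Fin n) : (fun _ => a k) =O[(𝒰 : Filter ℕ)] fun _ => (1 : ℂ) :=
    isBigO_const_const _ one_ne_zero _
  refine ⟨⟨fun h ν _ => ?_, fun h _ hz => ?_⟩, ⟨fun h ν _ => ?_, fun h _ hz => ?_⟩⟩
  · exact MvPolynomial.isBigO_coeff_of_isBigO_eval hdeg (fun a => h _ (hconst a)) ν
  · exact MvPolynomial.isBigO_eval_of_isBigO_coeff hdeg h hz
  · exact MvPolynomial.isLittleO_coeff_of_isLittleO_eval hdeg (fun a => h _ (hconst a)) ν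
  · exact MvPolynomial.isLittleO_eval_of_isLittleO_coeff hdeg h hz

/-- **Bounded/infinitesimal internal polynomials of finite degree via coefficients.**
Let `P = [p i]` be an internal polynomial in `n` variables over `*ℂ` of standard
(finite) degree `d`, i.e. `totalDegree (p i) ≤ d` `𝒰`-a.e.  Then:
`P` maps bounded points of `*ℂⁿ` to bounded points of `*ℂ` iff every coefficient
`a_ν` (for `|ν| ≤ d`) is a bounded element of `*ℂ`; and `P` maps bounded points to
infinitesimal points iff every coefficient `a_ν` (for `|ν| ≤ d`) is infinitesimal. -/
theorem finite_degree_internal_polynomial_bounded_iff_coeffs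
    (𝒰 : Ultrafilter ℕ) (h𝒰 : ∀ a : ℕ, 𝒰 ≠ pure a) (n d : ℕ)
    (p : ℕ → MvPolynomial (Fin n) ℂ)
    (hdeg : ∀ᶠ i in (𝒰 : Filter ℕ), (p i).totalDegree ≤ d) :
    ((∀ z : Fin n → ℕ → ℂ, (∀ k, BddSeq 𝒰 (z k)) →
        BddSeq 𝒰 fun i => MvPolynomial.eval (fun k => z k i) (p i)) ↔
      (∀ ν : Fin n →₀ ℕ, (ν.sum fun _ e => e) ≤ d →
        BddSeq 𝒰 fun i => (p i).coeff ν)) ∧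
    ((∀ z : Fin n → ℕ → ℂ, (∀ k, BddSeq 𝒰 (z k)) →
        InfmlSeq 𝒰 fun i => MvPolynomial.eval (fun k => z k i) (p i)) ↔
      (∀ ν : Fin n →₀ ℕ, (ν.sum fun _ e => e) ≤ d →
        InfmlSeq 𝒰 fun i => (p i).coeff ν)) :=
  finite_degree_internal_polynomial_bounded_iff_coeffs_general 𝒰 n d p hdeg
end

section
/- Let P = Σ_{|ν|≤d} a_ν X^ν be an internal polynomial in n variables over *ℂ (d possibly an infinite hypernatural). If (i) a_ν is bounded for every standard multi-index ν, and (ii) |a_ν|^{1/|ν|} is infinitesimal for every ν with |ν| infinite and |ν| ≤ d, then |P| := Σ |a_ν| X^ν maps bounded points of *ℂⁿ to bounded points of *ℂ. -/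
/-!
Let `|z_k| ≤ M` with `M` standard. Hypothesis (ii) forces a standard `D` beyond which
`|a_ν| ≤ (M + 1)^{-|ν|}`: otherwise a bad multi-index of maximal degree is internal, of infinite
degree, and has `|a_ν|^{1/|ν|} > 1/(M + 1)`. The terms with `|ν| > D` are then dominated by the
geometric series `∑_ν (M/(M+1))^{|ν|} = (M + 1)^n`, and the finitely many standard `ν` with
`|ν| ≤ D` have bounded coefficients by (i).
-/

open Filter

theorem exists_eventually_forall_norm_le_of_bddSeq {ι : Type*} {𝒰 : Ultrafilter ℕ}
    {x : ι → ℕ → ℂ} (s : Finset ι) (hx : ∀ k ∈ s, BddSeq 𝒰 (x k)) :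
    ∃ m : ℕ, ∀ᶠ i in (𝒰 : Filter ℕ), ∀ k ∈ s, ‖x k i‖ ≤ m := by
  choose! c hc using hx
  refine ⟨s.sup c, (eventually_all_finset s).2 fun k hk => (hc k hk).mono fun i hi => ?_⟩
  exact hi.trans (by exact_mod_cast Finset.le_sup hk)

namespace Finsupp

variable {σ : Type*} [Fintype σ]

theorem prod_pow_le_pow_degree {x : σ → ℝ} {M : ℝ} (hx0 : ∀ k, 0 ≤ x k) (hxM : ∀ k, x k ≤ M)
    (ν : σ →₀ ℕ) : ∏ k, x k ^ ν k ≤ M ^ ν.degree := by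
  calc ∏ k, x k ^ ν k ≤ ∏ k, M ^ ν k :=
        Finset.prod_le_prod (fun k _ => pow_nonneg (hx0 k) _)
          (fun k _ => pow_le_pow_left₀ (hx0 k) (hxM k) _)
    _ = M ^ ν.degree := by rw [Finset.prod_pow_eq_pow_sum, degree_eq_sum]

theorem sum_pow_degree_le {x : ℝ} (hx0 : 0 ≤ x) (hx1 : x < 1) (S : Finset (σ →₀ ℕ)) :
    ∑ ν ∈ S, x ^ ν.degree ≤ (1 - x)⁻¹ ^ Fintype.card σ := by
  classical
  set B := S.sup degree + 1
  have hS : S.map equivFunOnFinite.toEmbedding ⊆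
      Fintype.piFinset fun _ : σ => Finset.range B := by
    intro f hf
    obtain ⟨ν, hν, rfl⟩ := Finset.mem_map.1 hf
    exact Fintype.mem_piFinset.2 fun k =>
      Finset.mem_range.2 (Nat.lt_succ_of_le ((le_degree k ν).trans (Finset.le_sup hν)))
  calc ∑ ν ∈ S, x ^ ν.degree
      = ∑ f ∈ S.map equivFunOnFinite.toEmbedding, ∏ k, x ^ f k := by
        simp [Finset.prod_pow_eq_pow_sum, degree_eq_sum]
    _ ≤ ∑ f ∈ Fintype.piFinset fun _ : σ => Finset.range B, ∏ k, x ^ f k :=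
        Finset.sum_le_sum_of_subset_of_nonneg hS fun _ _ _ => by positivity
    _ = ∏ _k : σ, ∑ j ∈ Finset.range B, x ^ j := (Finset.prod_univ_sum _ _).symm
    _ ≤ ∏ _k : σ, (1 - x)⁻¹ := by
        refine Finset.prod_le_prod (fun _ _ => by positivity) fun _ _ => ?_
        have h := geom_sum_Ico_le_of_lt_one (m := 0) (n := B) hx0 hx1
        rwa [← Finset.range_eq_Ico, pow_zero, one_div] at h
    _ = (1 - x)⁻¹ ^ Fintype.card σ := Finset.prod_const _

end Finsupp

namespace MvPolynomial

variable {σ R : Type*} [SeminormedCommRing R]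

theorem exists_eventually_norm_coeff_le_pow {𝒰 : Ultrafilter ℕ} {d : ℕ → ℕ}
    {p : ℕ → MvPolynomial σ R}
    (hdeg : ∀ᶠ i in (𝒰 : Filter ℕ), (p i).totalDegree ≤ d i)
    (hinfdeg : ∀ ν : ℕ → (σ →₀ ℕ),
      (∀ m : ℕ, ∀ᶠ i in (𝒰 : Filter ℕ), m < (ν i).degree) →
      (∀ᶠ i in (𝒰 : Filter ℕ), (ν i).degree ≤ d i) →
      ∀ ε : ℝ, 0 < ε → ∀ᶠ i in (𝒰 : Filter ℕ),
        ‖(p i).coeff (ν i)‖ ^ ((1 : ℝ) / (ν i).degree) ≤ ε)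
    {r : ℝ} (hr : 0 < r) :
    ∃ D : ℕ, ∀ᶠ i in (𝒰 : Filter ℕ), ∀ ν ∈ (p i).support, D < ν.degree →
      ‖(p i).coeff ν‖ ≤ r ^ ν.degree := by
  classical
  by_contra! hbad
  set B := fun i => (p i).support.filter fun ν => r ^ ν.degree < ‖(p i).coeff ν‖
  have hmax : ∀ i, ∃ ν, (B i).Nonempty → ν ∈ B i ∧ ∀ μ ∈ B i, μ.degree ≤ ν.degree := fun i =>
    if h : (B i).Nonempty then (Finset.exists_max_image _ _ h).imp fun _ hν _ => hν
    else ⟨0, fun h' => absurd h' h⟩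
  choose ν hν using hmax
  have hlarge : ∀ D, ∀ᶠ i in (𝒰 : Filter ℕ), ν i ∈ B i ∧ D < (ν i).degree := by
    intro D
    filter_upwards [hbad D] with i ⟨μ, hμ, hDμ, hμbad⟩
    have hμB : μ ∈ B i := Finset.mem_filter.2 ⟨hμ, hμbad⟩
    obtain ⟨hνB, hνmax⟩ := hν i ⟨μ, hμB⟩
    exact ⟨hνB, hDμ.trans_le (hνmax μ hμB)⟩
  have hdegν : ∀ᶠ i in (𝒰 : Filter ℕ), (ν i).degree ≤ d i := by
    filter_upwards [hlarge 0, hdeg] with i hi hdi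
    exact (le_totalDegree (Finset.mem_filter.1 hi.1).1).trans hdi
  have hroot := hinfdeg ν (fun m => (hlarge m).mono fun _ hi => hi.2) hdegν r hr
  obtain ⟨i, ⟨hνB, hpos⟩, hroot_i⟩ := ((hlarge 0).and hroot).exists
  have hpos' : (0 : ℝ) < (ν i).degree := by exact_mod_cast hpos
  have hlt : r < ‖(p i).coeff (ν i)‖ ^ ((ν i).degree : ℝ)⁻¹ := by
    rw [Real.lt_rpow_inv_iff_of_pos hr.le (norm_nonneg _) hpos', Real.rpow_natCast]
    exact (Finset.mem_filter.1 hνB).2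
  rw [one_div] at hroot_i
  exact hlt.not_ge hroot_i

theorem sum_norm_coeff_mul_prod_pow_le [Fintype σ] (q : MvPolynomial σ R) {x : σ → ℝ}
    {M r c : ℝ} (hx0 : ∀ k, 0 ≤ x k) (hxM : ∀ k, x k ≤ M) (hM : 0 ≤ M) (hr : 0 ≤ r)
    (hrM : r * M < 1) (L : Finset (σ →₀ ℕ)) (hlow : ∀ ν ∈ L, ‖q.coeff ν‖ ≤ c)
    (hhigh : ∀ ν ∈ q.support, ν ∉ L → ‖q.coeff ν‖ ≤ r ^ ν.degree) :
    ∑ ν ∈ q.support, ‖q.coeff ν‖ * ∏ k, x k ^ ν k ≤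
      ∑ ν ∈ L, c * M ^ ν.degree + (1 - r * M)⁻¹ ^ Fintype.card σ := by
  classical
  have hterm : ∀ ν, ‖q.coeff ν‖ * ∏ k, x k ^ ν k ≤ ‖q.coeff ν‖ * M ^ ν.degree := fun ν =>
    mul_le_mul_of_nonneg_left (Finsupp.prod_pow_le_pow_degree hx0 hxM ν) (norm_nonneg _)
  rw [← Finset.sum_filter_add_sum_filter_not q.support (· ∈ L)]
  gcongr ?_ + ?_
  · calc _ ≤ ∑ ν ∈ q.support.filter (· ∈ L), ‖q.coeff ν‖ * M ^ ν.degree :=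
          Finset.sum_le_sum fun ν _ => hterm ν
      _ ≤ ∑ ν ∈ L, ‖q.coeff ν‖ * M ^ ν.degree :=
          Finset.sum_le_sum_of_subset_of_nonneg (fun ν hν => (Finset.mem_filter.1 hν).2)
            fun _ _ _ => by positivity
      _ ≤ _ := Finset.sum_le_sum fun ν hν =>
          mul_le_mul_of_nonneg_right (hlow ν hν) (by positivity)
  · calc _ ≤ ∑ ν ∈ q.support.filter (· ∉ L), (r * M) ^ ν.degree :=
          Finset.sum_le_sum fun ν hν => by
            obtain ⟨hνq, hνL⟩ := Finset.mem_filter.1 hν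
            rw [mul_pow]
            exact (hterm ν).trans (mul_le_mul_of_nonneg_right (hhigh ν hνq hνL) (by positivity))
      _ ≤ _ := Finsupp.sum_pow_degree_le (by positivity) hrM _

end MvPolynomial

theorem abs_internal_polynomial_bounded_of_coeffs_general
    (𝒰 : Ultrafilter ℕ) (n : ℕ) (d : ℕ → ℕ)
    (p : ℕ → MvPolynomial (Fin n) ℂ)
    (hdeg : ∀ᶠ i in (𝒰 : Filter ℕ), (p i).totalDegree ≤ d i)
    (hstd : ∀ ν : Fin n →₀ ℕ, BddSeq 𝒰 fun i => (p i).coeff ν)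
    (hinfdeg : ∀ ν : ℕ → (Fin n →₀ ℕ),
      (∀ m : ℕ, ∀ᶠ i in (𝒰 : Filter ℕ), m < ((ν i).sum fun _ e => e)) →
      (∀ᶠ i in (𝒰 : Filter ℕ), ((ν i).sum fun _ e => e) ≤ d i) →
      ∀ ε : ℝ, 0 < ε → ∀ᶠ i in (𝒰 : Filter ℕ),
        ‖(p i).coeff (ν i)‖ ^ ((1 : ℝ) / ((ν i).sum fun _ e => e)) ≤ ε) :
    ∀ z : Fin n → ℕ → ℂ, (∀ k, BddSeq 𝒰 (z k)) →
      ∃ m : ℕ, ∀ᶠ i in (𝒰 : Filter ℕ),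
        (∑ ν ∈ (p i).support,
          ‖(p i).coeff ν‖ * ∏ k : Fin n, ‖z k i‖ ^ (ν k)) ≤ (m : ℝ) := by
  intro z hz
  obtain ⟨M, hM⟩ := exists_eventually_forall_norm_le_of_bddSeq Finset.univ fun k _ => hz k
  have hr : (0 : ℝ) < ((M : ℝ) + 1)⁻¹ := by positivity
  have hrM : ((M : ℝ) + 1)⁻¹ * M < 1 := by
    rw [inv_mul_lt_iff₀ (by positivity)]
    linarith
  obtain ⟨D, hD⟩ := MvPolynomial.exists_eventually_norm_coeff_le_pow hdeg hinfdeg hr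
  set L := (Finsupp.finite_of_degree_le (σ := Fin n) D).toFinset
  obtain ⟨c, hc⟩ := exists_eventually_forall_norm_le_of_bddSeq L fun ν _ => hstd ν
  refine ⟨⌈∑ ν ∈ L, (c : ℝ) * M ^ ν.degree + (1 - ((M : ℝ) + 1)⁻¹ * M)⁻¹ ^ n⌉₊, ?_⟩
  filter_upwards [hM, hD, hc] with i hMi hDi hci
  refine (MvPolynomial.sum_norm_coeff_mul_prod_pow_le (p i) (fun k => norm_nonneg _)
    (fun k => hMi k (Finset.mem_univ k)) M.cast_nonneg hr.le hrM L hci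
    fun ν hν hνL => hDi ν hν ?_).trans ?_
  · simpa [L] using hνL
  · simpa using Nat.le_ceil _

/-- **Sufficient coefficient condition for absolute boundedness (Proposition 1.4.2).**
Let `P = Σ_{|ν| ≤ d} a_ν X^ν = [p i]` be an internal polynomial in `n` variables over
`*ℂ`, of internal degree at most the hypernatural `d = [d i]`.  Assume
(i) `a_ν` is bounded for every standard multi-index `ν`, and
(ii) `|a_ν|^(1/|ν|)` is infinitesimal for every internal multi-index `ν = [ν i]`
with `|ν|` infinite and `|ν| ≤ d`.
Then `|P| = Σ |a_ν| X^ν` maps every bounded point of `*ℂⁿ` to a bounded point of `*ℂ`. -/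
theorem abs_internal_polynomial_bounded_of_coeffs
    (𝒰 : Ultrafilter ℕ) (h𝒰 : ∀ a : ℕ, 𝒰 ≠ pure a) (n : ℕ) (d : ℕ → ℕ)
    (p : ℕ → MvPolynomial (Fin n) ℂ)
    (hdeg : ∀ᶠ i in (𝒰 : Filter ℕ), (p i).totalDegree ≤ d i)
    (hstd : ∀ ν : Fin n →₀ ℕ, BddSeq 𝒰 fun i => (p i).coeff ν)
    (hinfdeg : ∀ ν : ℕ → (Fin n →₀ ℕ),
      (∀ m : ℕ, ∀ᶠ i in (𝒰 : Filter ℕ), m < ((ν i).sum fun _ e => e)) →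
      (∀ᶠ i in (𝒰 : Filter ℕ), ((ν i).sum fun _ e => e) ≤ d i) →
      ∀ ε : ℝ, 0 < ε → ∀ᶠ i in (𝒰 : Filter ℕ),
        ‖(p i).coeff (ν i)‖ ^ ((1 : ℝ) / ((ν i).sum fun _ e => e)) ≤ ε) :
    ∀ z : Fin n → ℕ → ℂ, (∀ k, BddSeq 𝒰 (z k)) →
      ∃ m : ℕ, ∀ᶠ i in (𝒰 : Filter ℕ),
        (∑ ν ∈ (p i).support,
          ‖(p i).coeff ν‖ * ∏ k : Fin n, ‖z k i‖ ^ (ν k)) ≤ (m : ℝ) :=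
  abs_internal_polynomial_bounded_of_coeffs_general 𝒰 n d p hdeg hstd hinfdeg
end

section
/- The ideal ⁱℂ[X₁,…,Xₙ] of infinitesimal internal polynomials is idempotent: every infinitesimal internal polynomial P can be written as P = ε·Q with ε an infinitesimal element of *ℂ and Q an infinitesimal internal polynomial; in particular (ⁱℂ[X])² = ⁱℂ[X]. -/
open Filter

/-- An internal polynomial `[p i]` is *infinitesimal* if it maps every bounded point
of `*ℂⁿ` to an infinitesimal point of `*ℂ`. -/
def InfmlPoly (𝒰 : Ultrafilter ℕ) (n : ℕ) (p : ℕ → MvPolynomial (Fin n) ℂ) : Prop :=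
  ∀ z : Fin n → ℕ → ℂ, (∀ k, BddSeq 𝒰 (z k)) →
    InfmlSeq 𝒰 fun i => MvPolynomial.eval (fun k => z k i) (p i)
open Topology MvPolynomial

/-! For each standard radius `m`, the maximum `T m i` of `|p i|` on the closed polydisc of
radius `m` is infinitesimal. A diagonal argument over `m` yields a single infinitesimal `t`
with `T m ≤ t` almost everywhere for every `m`, hence `|P| ≤ t` at every bounded point; so
`P = ε Q` with `ε = √t` (made positive) and `Q = P / ε`, which satisfies `|Q| ≤ √t`. -/

theorem exists_tendsto_zero_eventually_ge {ι : Type*} {l : Filter ι} {T : ℕ → ι → ℝ}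
    (hT₀ : ∀ m i, 0 ≤ T m i) (hT : ∀ m, Tendsto (T m) l (𝓝 0)) :
    ∃ t : ι → ℝ, (∀ i, 0 ≤ t i) ∧ Tendsto t l (𝓝 0) ∧ ∀ m, ∀ᶠ i in l, T m i ≤ t i := by
  -- Truncating `T m` at `1 / (m + 1)` keeps the supremum over all `m` finite and small.
  set u : ℕ → ι → ℝ := fun m i => min (T m i) (1 / (m + 1))
  have hu_le : ∀ m i, u m i ≤ 1 / (m + 1) := fun m i => min_le_right _ _
  have hbdd : ∀ i, BddAbove (Set.range fun m => u m i) := by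
    refine fun i => ⟨1, ?_⟩
    rintro _ ⟨m, rfl⟩
    exact (hu_le m i).trans (div_le_one_of_le₀ (by simp) (by positivity))
  have ht₀ : ∀ i, 0 ≤ ⨆ m, u m i :=
    fun i => (le_min (hT₀ 0 i) (by positivity)).trans (le_ciSup (hbdd i) 0)
  refine ⟨fun i => ⨆ m, u m i, ht₀, tendsto_order.2 ⟨?_, ?_⟩, ?_⟩
  · exact fun a ha => Eventually.of_forall fun i => ha.trans_le (ht₀ i)
  · intro a ha
    obtain ⟨M, hM⟩ := exists_nat_one_div_lt (half_pos ha)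
    filter_upwards [(Finset.range M).eventually_all.2 fun m _ =>
      (hT m).eventually (eventually_le_nhds (half_pos ha))] with i hi
    refine (ciSup_le fun m => ?_).trans_lt (half_lt_self ha)
    rcases lt_or_ge m M with hm | hm
    · exact (min_le_left _ _).trans (hi m (Finset.mem_range.2 hm))
    · refine (hu_le m i).trans (le_trans ?_ hM.le)
      gcongr
  · intro m
    filter_upwards [(hT m).eventually (eventually_le_nhds (by positivity : (0 : ℝ) < 1 / (m + 1)))]
      with i hi
    exact (min_eq_left hi).symm.trans_le (le_ciSup (hbdd i) m)

theorem infmlSeq_iff_tendsto_norm {𝒰 : Ultrafilter ℕ} {x : ℕ → ℂ} :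
    InfmlSeq 𝒰 x ↔ Tendsto (fun i => ‖x i‖) 𝒰 (𝓝 0) := by
  refine ⟨fun h => tendsto_order.2 ⟨?_, ?_⟩, fun h ε hε => h.eventually (eventually_le_nhds hε)⟩
  · exact fun a ha => Eventually.of_forall fun i => ha.trans_le (norm_nonneg _)
  · exact fun a ha => (h (a / 2) (half_pos ha)).mono fun i hi => hi.trans_lt (half_lt_self ha)

theorem exists_eventually_mem_closedBall_of_bddSeq {ι : Type*} [Fintype ι] {𝒰 : Ultrafilter ℕ}
    {z : ι → ℕ → ℂ} (hz : ∀ k, BddSeq 𝒰 (z k)) :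
    ∃ m : ℕ, ∀ᶠ i in (𝒰 : Filter ℕ), (fun k => z k i) ∈ Metric.closedBall (0 : ι → ℂ) m := by
  choose m hm using hz
  refine ⟨∑ k, m k, ?_⟩
  filter_upwards [eventually_all.2 hm] with i hi
  rw [mem_closedBall_zero_iff, pi_norm_le_iff_of_nonneg (Nat.cast_nonneg _)]
  exact fun k => (hi k).trans (mod_cast Finset.single_le_sum (fun _ _ => Nat.zero_le _)
    (Finset.mem_univ k))

theorem Ultrafilter.le_atTop_of_ne_pure {𝒰 : Ultrafilter ℕ} (h : ∀ a, 𝒰 ≠ pure a) :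
    (𝒰 : Filter ℕ) ≤ atTop :=
  Nat.cofinite_eq_atTop ▸ 𝒰.le_cofinite_or_eq_pure.resolve_right fun ⟨a, ha⟩ => h a ha

theorem InfmlPoly.exists_tendsto_zero_eventually_norm_eval_le {𝒰 : Ultrafilter ℕ} {n : ℕ}
    {p : ℕ → MvPolynomial (Fin n) ℂ} (hp : InfmlPoly 𝒰 n p) :
    ∃ t : ℕ → ℝ, (∀ i, 0 ≤ t i) ∧ Tendsto t 𝒰 (𝓝 0) ∧
      ∀ z : Fin n → ℕ → ℂ, (∀ k, BddSeq 𝒰 (z k)) →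
        ∀ᶠ i in (𝒰 : Filter ℕ), ‖eval (fun k => z k i) (p i)‖ ≤ t i := by
  have hmax : ∀ i (m : ℕ), ∃ w ∈ Metric.closedBall (0 : Fin n → ℂ) m,
      IsMaxOn (fun z => ‖eval z (p i)‖) (Metric.closedBall 0 m) w := fun i m =>
    (isCompact_closedBall 0 _).exists_isMaxOn (Metric.nonempty_closedBall.2 (Nat.cast_nonneg m))
      (continuous_eval _).norm.continuousOn
  choose w hw_mem hw_max using hmax
  have hw_bdd : ∀ m k, BddSeq 𝒰 fun i => w i m k := fun m k =>
    ⟨m, Eventually.of_forall fun i =>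
      (norm_le_pi_norm (w i m) k).trans (mem_closedBall_zero_iff.1 (hw_mem i m))⟩
  obtain ⟨t, ht₀, ht, hwt⟩ := exists_tendsto_zero_eventually_ge
    (T := fun m i => ‖eval (w i m) (p i)‖) (fun _ _ => norm_nonneg _)
    fun m => infmlSeq_iff_tendsto_norm.1 (hp (fun k i => w i m k) (hw_bdd m))
  refine ⟨t, ht₀, ht, fun z hz => ?_⟩
  obtain ⟨m, hm⟩ := exists_eventually_mem_closedBall_of_bddSeq hz
  filter_upwards [hm, hwt m] with i hzi hwi
  exact (hw_max i m hzi).trans hwi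

/-- **The ideal of infinitesimal internal polynomials is idempotent (Lemma 6.4).**
Every infinitesimal internal polynomial `P = [p i]` can be written as `P = ε • Q`
where `ε = [e i]` is an infinitesimal element of `*ℂ` and `Q = [q i]` is an
infinitesimal internal polynomial; in particular `(ⁱℂ[X₁,…,Xₙ])² = ⁱℂ[X₁,…,Xₙ]`. -/
theorem infinitesimal_internal_polynomial_ideal_idempotent
    (𝒰 : Ultrafilter ℕ) (h𝒰 : ∀ a : ℕ, 𝒰 ≠ pure a) (n : ℕ)
    (p : ℕ → MvPolynomial (Fin n) ℂ) (hp : InfmlPoly 𝒰 n p) :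
    ∃ (e : ℕ → ℂ) (q : ℕ → MvPolynomial (Fin n) ℂ),
      InfmlSeq 𝒰 e ∧ InfmlPoly 𝒰 n q ∧
      ∀ᶠ i in (𝒰 : Filter ℕ), p i = MvPolynomial.C (e i) * q i := by
  obtain ⟨t, ht₀, ht, hpt⟩ := hp.exists_tendsto_zero_eventually_norm_eval_le
  -- The summand `1 / (i + 1)` makes `s` positive; it is infinitesimal because `𝒰` is
  -- non-principal. At bounded points `|p / s| ≤ t / s ≤ s`.
  set s : ℕ → ℝ := fun i => √(t i + 1 / (i + 1))
  have ht_add_pos : ∀ i, 0 < t i + 1 / (i + 1) :=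
    fun i => add_pos_of_nonneg_of_pos (ht₀ i) Nat.one_div_pos_of_nat
  have hs_pos : ∀ i, 0 < s i := fun i => Real.sqrt_pos.2 (ht_add_pos i)
  have hs_sq : ∀ i, t i ≤ s i ^ 2 := fun i => by
    rw [Real.sq_sqrt (ht_add_pos i).le]
    exact le_add_of_nonneg_right Nat.one_div_pos_of_nat.le
  have hs : Tendsto s 𝒰 (𝓝 0) := by
    simpa [s] using (ht.add (tendsto_one_div_add_atTop_nhds_zero_nat.mono_left
      (Ultrafilter.le_atTop_of_ne_pure h𝒰))).sqrt
  refine ⟨fun i => s i, fun i => C (s i : ℂ)⁻¹ * p i, ?_, fun z hz => ?_, ?_⟩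
  · simpa [infmlSeq_iff_tendsto_norm, abs_of_pos (hs_pos _)] using hs
  · refine infmlSeq_iff_tendsto_norm.2 <|
      squeeze_zero' (Eventually.of_forall fun _ => norm_nonneg _) ?_ hs
    filter_upwards [hpt z hz] with i hi
    rw [eval_mul, eval_C, norm_mul, norm_inv, Complex.norm_real, Real.norm_of_nonneg (hs_pos i).le,
      inv_mul_le_iff₀ (hs_pos i), ← sq]
    exact hi.trans (hs_sq i)
  · refine Eventually.of_forall fun i => ?_
    rw [← mul_assoc, ← C_mul, mul_inv_cancel₀ (Complex.ofReal_ne_zero.2 (hs_pos i).ne'), C_1,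
      one_mul]
end

section
/- Let *A be an ℵ₁-saturated (comprehensive) ultrapower of a commutative ring A via a nonprincipal ultrafilter on ℕ, and let 𝔞 be an internal ideal of *A. Then the canonical ring homomorphism θ : *A → lim_← *A/𝔞^{n+1} (inverse limit over standard n ∈ ℕ) is surjective, with kernel ∩_{n>0} 𝔞ⁿ. Consequently *A/∩_{n>0}𝔞ⁿ is complete for the 𝔞-adic topology. -/
open Filter

/-- **Theorem 2.6.1: completeness of the ultrapower modulo the halo of `0`.**
Let `*A = ∏_𝒰 A` be the ultrapower of a commutative ring `A` by a nonprincipal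
ultrafilter `𝒰` on `ℕ` (hence comprehensive), realized as the germ ring
`Germ 𝒰 A`, and let `𝔞 = [a i]` be an internal ideal, with internal powers
`apow m = ∏_𝒰 (a i)^(m+1)`.  Then the canonical ring homomorphism
`θ : *A → lim_← *A/𝔞^(n+1)` is surjective — every coherent sequence
`(x m)` with `x (m+1) - x m ∈ 𝔞^(m+1)` lifts to some `y ∈ *A` — and its kernel is
`⋂_{n>0} 𝔞ⁿ`.  Consequently `*A/⋂_{n>0} 𝔞ⁿ` is complete for the `𝔞`-adic topology. -/
theorem ultrapower_adically_complete
    (𝒰 : Ultrafilter ℕ) (h𝒰 : ∀ a : ℕ, 𝒰 ≠ pure a)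
    {A : Type*} [CommRing A] (a : ℕ → Ideal A)
    (apow : ℕ → Ideal (Germ (𝒰 : Filter ℕ) A))
    (hapow : ∀ (m : ℕ) (x : ℕ → A),
      (↑x : Germ (𝒰 : Filter ℕ) A) ∈ apow m ↔ ∀ᶠ i in (𝒰 : Filter ℕ), x i ∈ (a i) ^ (m + 1)) :
    (∀ x : ℕ → Germ (𝒰 : Filter ℕ) A,
      (∀ m : ℕ, x (m + 1) - x m ∈ apow m) →
        ∃ y : Germ (𝒰 : Filter ℕ) A, ∀ m : ℕ,
          Ideal.Quotient.mk (apow m) y = Ideal.Quotient.mk (apow m) (x m)) ∧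
    RingHom.ker (Pi.ringHom fun m : ℕ => Ideal.Quotient.mk (apow m)) = ⨅ m : ℕ, apow m := by
  classical
  have hcof : (𝒰 : Filter ℕ) ≤ cofinite := by
    rcases 𝒰.le_cofinite_or_eq_pure with h | ⟨b, hb⟩
    · exact h
    · exact absurd hb (h𝒰 b)
  constructor
  · intro x hx
    -- choose representatives
    have hrep : ∀ m, ∃ f : ℕ → A, (↑f : Germ (𝒰 : Filter ℕ) A) = x m := fun m =>
      Quotient.exists_rep (x m)
    choose xr hxr using hrep
    -- coherence pointwise
    have hco : ∀ m, ∀ᶠ i in (𝒰 : Filter ℕ), xr (m + 1) i - xr m i ∈ (a i) ^ (m + 1) := by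
      intro m
      have : (↑(fun i => xr (m + 1) i - xr m i) : Germ (𝒰 : Filter ℕ) A) ∈ apow m := by
        have : (↑(fun i => xr (m + 1) i - xr m i) : Germ (𝒰 : Filter ℕ) A)
            = x (m + 1) - x m := by
          rw [← hxr (m + 1), ← hxr m]; rfl
        rw [this]; exact hx m
      exact (hapow m _).1 this
    -- the sets S m
    set S : ℕ → Set ℕ := fun m => {i | (∀ k < m, xr (k + 1) i - xr k i ∈ (a i) ^ (k + 1)) ∧ m ≤ i}
      with hS
    have hSmem : ∀ m, S m ∈ (𝒰 : Filter ℕ) := by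
      intro m
      have h1 : ∀ᶠ i in (𝒰 : Filter ℕ), ∀ k < m, xr (k + 1) i - xr k i ∈ (a i) ^ (k + 1) := by
        induction m with
        | zero => simp
        | succ n ih =>
          filter_upwards [ih, hco n] with i h1 h2 k hk
          rcases Nat.lt_succ_iff_lt_or_eq.1 hk with h | h
          · exact h1 k h
          · subst h; exact h2
      have h2 : ∀ᶠ i in (𝒰 : Filter ℕ), m ≤ i := by
        apply hcof
        simp only [mem_cofinite]
        exact (Set.finite_Iio m).subset (by intro i hi; simpa using hi)
      filter_upwards [h1, h2] with i ha hb
      exact ⟨ha, hb⟩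
    -- the diagonal index
    set f : ℕ → ℕ := fun i => Nat.findGreatest (fun m => i ∈ S m) i with hf
    -- telescoping
    have tele : ∀ (i : ℕ) (m n : ℕ), m ≤ n →
        (∀ k < n, xr (k + 1) i - xr k i ∈ (a i) ^ (k + 1)) →
        xr n i - xr m i ∈ (a i) ^ (m + 1) := by
      intro i m n hmn h
      induction n with
      | zero =>
        have : m = 0 := Nat.le_zero.mp hmn
        subst this; simp [Ideal.zero_mem]
      | succ n ih =>
        rcases Nat.le_succ_iff.mp hmn with h' | h'
        · have step : xr (n + 1) i - xr n i ∈ (a i) ^ (m + 1) :=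
            Ideal.pow_le_pow_right (Nat.succ_le_succ h') (h n (Nat.lt_succ_self n))
          have rest : xr n i - xr m i ∈ (a i) ^ (m + 1) :=
            ih h' (fun k hk => h k (hk.trans (Nat.lt_succ_self n)))
          have : xr (n + 1) i - xr m i
              = (xr (n + 1) i - xr n i) + (xr n i - xr m i) := by ring
          rw [this]; exact Ideal.add_mem _ step rest
        · subst h'; simp [Ideal.zero_mem]
    refine ⟨↑(fun i => xr (f i) i), fun m => ?_⟩
    rw [Ideal.Quotient.eq, ← hxr m]
    have : (↑(fun i => xr (f i) i) : Germ (𝒰 : Filter ℕ) A) - ↑(xr m)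
        = ↑(fun i => xr (f i) i - xr m i) := rfl
    rw [this, hapow m]
    filter_upwards [hSmem (m + 1)] with i hi
    have hfi_ge : m + 1 ≤ f i := Nat.le_findGreatest hi.2 hi
    have hfi_mem : i ∈ S (f i) :=
      Nat.findGreatest_spec (P := fun m => i ∈ S m) hi.2 hi
    exact tele i m (f i) (Nat.le_of_succ_le hfi_ge) hfi_mem.1
  · ext z
    rw [RingHom.mem_ker, Ideal.mem_iInf]
    constructor
    · intro h m
      exact Ideal.Quotient.eq_zero_iff_mem.1 (congrFun h m)
    · intro h
      funext m
      exact Ideal.Quotient.eq_zero_iff_mem.2 (h m)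
end

section
/- Let A be a commutative ring, 𝔍 an ideal of A with ∩_{n>0} 𝔍ⁿ = 0 and A complete for the 𝔍-adic topology, and let *A be an ℵ₁-saturated ultrapower of A with μ(0) = ∩_{n>0} (*𝔍)ⁿ. Then the natural map Â = lim_← A/𝔍^{n+1} → *A/μ(0) is an injective ring homomorphism, and it is an isomorphism if and only if A/𝔍^{n+1} is a finite set for every n ∈ ℕ. -/
open Filter

/-- The constant-map ring homomorphism `A →+* *A = Germ 𝒰 A`. -/
def constToGerm (𝒰 : Ultrafilter ℕ) (A : Type*) [CommRing A] :
    A →+* Germ (𝒰 : Filter ℕ) A :=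
  (Filter.Germ.coeRingHom (𝒰 : Filter ℕ)).comp (Pi.constRingHom ℕ A)

/-- **Corollary 2.6.3: completions versus enlargements.**  Let `A` be a commutative
ring, `𝔍` an ideal with `⋂_{n>0} 𝔍ⁿ = 0` and `A` complete for the `𝔍`-adic topology
(every coherent sequence has a limit), and let `*A = Germ 𝒰 A` be the ultrapower of
`A` by a nonprincipal ultrafilter `𝒰` on `ℕ`, with internal powers
`Jpow m = ∏_𝒰 𝔍^(m+1)` and halo `μ(0) = ⋂_{n>0} (*𝔍)ⁿ = ⨅ m, Jpow m`.  Then the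
natural map `Â = A → *A/μ(0)` is an injective ring homomorphism, and it is an
isomorphism if and only if `A/𝔍^(n+1)` is a finite set for every `n`. -/
theorem completion_embeds_in_ultrapower_mod_halo
    (𝒰 : Ultrafilter ℕ) (h𝒰 : ∀ a : ℕ, 𝒰 ≠ pure a)
    {A : Type*} [CommRing A] (J : Ideal A)
    (hsep : (⨅ m : ℕ, J ^ (m + 1)) = ⊥)
    (hcompl : ∀ x : ℕ → A, (∀ m : ℕ, x (m + 1) - x m ∈ J ^ (m + 1)) →
      ∃ y : A, ∀ m : ℕ, y - x m ∈ J ^ (m + 1))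
    (Jpow : ℕ → Ideal (Germ (𝒰 : Filter ℕ) A))
    (hJpow : ∀ (m : ℕ) (x : ℕ → A),
      (↑x : Germ (𝒰 : Filter ℕ) A) ∈ Jpow m ↔ ∀ᶠ i in (𝒰 : Filter ℕ), x i ∈ J ^ (m + 1)) :
    Function.Injective
      ((Ideal.Quotient.mk (⨅ m : ℕ, Jpow m)).comp (constToGerm 𝒰 A)) ∧
    (Function.Bijective
      ((Ideal.Quotient.mk (⨅ m : ℕ, Jpow m)).comp (constToGerm 𝒰 A)) ↔
      ∀ m : ℕ, Finite (A ⧸ J ^ (m + 1))) := by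
  have hinj : Function.Injective
      ((Ideal.Quotient.mk (⨅ m : ℕ, Jpow m)).comp (constToGerm 𝒰 A)) := by
    rw [injective_iff_map_eq_zero]
    intro a ha
    have h1 : constToGerm 𝒰 A a ∈ ⨅ m : ℕ, Jpow m := by
      rwa [RingHom.comp_apply, Ideal.Quotient.eq_zero_iff_mem] at ha
    rw [Ideal.mem_iInf] at h1
    have h2 : a ∈ ⨅ m : ℕ, J ^ (m + 1) := by
      rw [Ideal.mem_iInf]
      intro m
      have := (hJpow m (fun _ => a)).mp (h1 m)
      exact this.exists.choose_spec
    rw [hsep] at h2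
    exact h2
  refine ⟨hinj, ?_, fun hfin => ⟨hinj, ?_⟩⟩
  · -- bijective → finite quotients
    rintro ⟨-, hsurj⟩ m
    by_contra hinf
    rw [not_finite_iff_infinite] at hinf
    obtain e := hinf.natEmbedding
    have hx : ∀ i : ℕ, ∃ a : A, Ideal.Quotient.mk (J ^ (m + 1)) a = e i := fun i =>
      Ideal.Quotient.mk_surjective (e i)
    choose x hxe using hx
    obtain ⟨a, ha⟩ := hsurj (Ideal.Quotient.mk _ (↑x : Germ (𝒰 : Filter ℕ) A))
    have hmem : constToGerm 𝒰 A a - (↑x : Germ (𝒰 : Filter ℕ) A) ∈ ⨅ m : ℕ, Jpow m := by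
      rw [← Ideal.Quotient.eq]
      exact ha
    rw [Ideal.mem_iInf] at hmem
    have h3 : (↑(fun i => a - x i) : Germ (𝒰 : Filter ℕ) A) ∈ Jpow m := hmem m
    have h4 := (hJpow m _).mp h3
    have hsub : {i : ℕ | a - x i ∈ J ^ (m + 1)}.Subsingleton := by
      intro i hi j hj
      apply e.injective
      rw [← hxe i, ← hxe j]
      rw [Ideal.Quotient.eq]
      have : x i - x j = (a - x j) - (a - x i) := by ring
      rw [this]
      exact Submodule.sub_mem _ hj hi
    obtain ⟨b, -, hb⟩ := Ultrafilter.eq_pure_of_finite_mem hsub.finite h4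
    exact h𝒰 b hb
  · -- finite quotients → surjective
    intro z
    obtain ⟨g, rfl⟩ := Ideal.Quotient.mk_surjective z
    induction g using Filter.Germ.inductionOn with
    | _ x => ?_
    have key : ∀ m : ℕ, ∃ c : A, ∀ᶠ i in (𝒰 : Filter ℕ),
        Ideal.Quotient.mk (J ^ (m + 1)) (x i) = Ideal.Quotient.mk (J ^ (m + 1)) c := by
      intro m
      haveI := hfin m
      obtain ⟨b, hb⟩ := Ultrafilter.eq_pure_of_finite
        (Ultrafilter.map (fun i => Ideal.Quotient.mk (J ^ (m + 1)) (x i)) 𝒰)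
      obtain ⟨c, hc⟩ := Ideal.Quotient.mk_surjective b
      refine ⟨c, ?_⟩
      have : {b} ∈ Ultrafilter.map (fun i => Ideal.Quotient.mk (J ^ (m + 1)) (x i)) 𝒰 := by
        rw [hb]; exact (Ultrafilter.mem_pure).mpr rfl
      rw [Ultrafilter.mem_map] at this
      filter_upwards [this] with i hi
      simp only [Set.mem_preimage, Set.mem_singleton_iff] at hi
      rw [hi, hc]
    choose y hy using key
    have hcoh : ∀ m : ℕ, y (m + 1) - y m ∈ J ^ (m + 1) := by
      intro m
      have h5 := (hy m).and (hy (m + 1))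
      obtain ⟨i, hi1, hi2⟩ := h5.exists
      have e1 : x i - y m ∈ J ^ (m + 1) := (Ideal.Quotient.eq).mp hi1
      have e2 : x i - y (m + 1) ∈ J ^ (m + 2) := (Ideal.Quotient.eq).mp hi2
      have e3 : x i - y (m + 1) ∈ J ^ (m + 1) :=
        Ideal.pow_le_pow_right (by omega) e2
      have : y (m + 1) - y m = (x i - y m) - (x i - y (m + 1)) := by ring
      rw [this]
      exact Submodule.sub_mem _ e1 e3
    obtain ⟨a, haa⟩ := hcompl y hcoh
    refine ⟨a, ?_⟩
    rw [RingHom.comp_apply, Ideal.Quotient.eq]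
    rw [Ideal.mem_iInf]
    intro m
    have heq : constToGerm 𝒰 A a - (↑x : Germ (𝒰 : Filter ℕ) A)
        = (↑(fun i => a - x i) : Germ (𝒰 : Filter ℕ) A) := rfl
    rw [heq, hJpow m]
    filter_upwards [hy m] with i hi
    have e1 : x i - y m ∈ J ^ (m + 1) := (Ideal.Quotient.eq).mp hi
    have : a - x i = (a - y m) - (x i - y m) := by ring
    rw [this]
    exact Submodule.sub_mem _ (haa m) e1
end

section
/- Let *R be an internal ring and 𝔍 = ∏_𝒰 𝔍_i an internal ideal. Define the internal radical ⁱⁿᵗ√𝔍 = {f ∈ *R : ∃ n ∈ *ℕ, fⁿ ∈ 𝔍}. Then ⁱⁿᵗ√𝔍 equals the intersection of all internal prime ideals of *R containing 𝔍, and equals the ultraproduct ∏_𝒰 √𝔍_i of the radicals. -/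
open Filter

/-- An ideal `P` of the ultraproduct `(Π i, R i) ⧸ J` is *internal* if its membership is
described `𝒰`-a.e. by a family of ideals of the `R i`. -/
def IsInternalIdeal {I : Type*} (𝒰 : Ultrafilter I) {R : I → Type*} [∀ i, CommRing (R i)]
    (J : Ideal (Π i, R i)) (P : Ideal ((Π i, R i) ⧸ J)) : Prop :=
  ∃ F : Π i, Ideal (R i), ∀ x : Π i, R i,
    Ideal.Quotient.mk J x ∈ P ↔ ∀ᶠ i in (𝒰 : Filter I), x i ∈ F i

/-- If an internal ideal is prime, then almost every member of the describing family is prime. -/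
lemma ae_prime_of_internal_prime {I : Type*} (𝒰 : Ultrafilter I) {R : I → Type*}
    [∀ i, CommRing (R i)] (J : Ideal (Π i, R i)) (P : Ideal ((Π i, R i) ⧸ J))
    (hP : P.IsPrime) (G : Π i, Ideal (R i))
    (hG : ∀ x : Π i, R i, Ideal.Quotient.mk J x ∈ P ↔ ∀ᶠ i in (𝒰 : Filter I), x i ∈ G i) :
    ∀ᶠ i in (𝒰 : Filter I), (G i).IsPrime := by
  by_contra hc
  have hB : ∀ᶠ i in (𝒰 : Filter I), ¬ (G i).IsPrime := Ultrafilter.eventually_not.2 hc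
  have hB' : ∀ᶠ i in (𝒰 : Filter I),
      (G i) = ⊤ ∨ ∃ (a : R i) (_ : a ∉ G i) (b : R i) (_ : b ∉ G i), a * b ∈ G i :=
    hB.mono fun i hi => Ideal.not_isPrime_iff.1 hi
  rcases Ultrafilter.eventually_or.1 hB' with htop | hab
  · have : Ideal.Quotient.mk J (1 : Π i, R i) ∈ P :=
      (hG 1).2 (htop.mono fun i hi => by simp [hi])
    exact hP.ne_top ((Ideal.eq_top_iff_one P).2 (by simpa using this))
  · classical
    set a : Π i, R i := fun i =>
      if h : ∃ (a : R i) (_ : a ∉ G i) (b : R i) (_ : b ∉ G i), a * b ∈ G i then h.choose else 0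
    set b : Π i, R i := fun i =>
      if h : ∃ (a : R i) (_ : a ∉ G i) (b : R i) (_ : b ∉ G i), a * b ∈ G i then
        h.choose_spec.choose_spec.choose else 0
    have key : ∀ᶠ i in (𝒰 : Filter I), a i ∉ G i ∧ b i ∉ G i ∧ a i * b i ∈ G i := by
      refine hab.mono fun i hi => ?_
      simp only [a, b, dif_pos hi]
      exact ⟨hi.choose_spec.choose, hi.choose_spec.choose_spec.choose_spec.choose,
        hi.choose_spec.choose_spec.choose_spec.choose_spec⟩
    have hmul : Ideal.Quotient.mk J (a * b) ∈ P :=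
      (hG (a * b)).2 (key.mono fun i hi => hi.2.2)
    rw [map_mul] at hmul
    rcases hP.mem_or_mem hmul with h | h
    · exact ((key.and ((hG a).1 h)).exists).elim fun i hi => hi.1.1 hi.2
    · exact ((key.and ((hG b).1 h)).exists).elim fun i hi => hi.1.2.1 hi.2

/-- **The internal radical (§3.1).**  Let `*R = ∏_𝒰 R i` be an internal ring and
`𝔍 = ∏_𝒰 F i` an internal ideal.  The internal radical
`ⁱⁿᵗ√𝔍 = {f | fⁿ ∈ 𝔍 for some hypernatural n = [m i]}` equals the intersection of all
internal prime ideals of `*R` containing `𝔍`, and equals the ultraproduct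
`∏_𝒰 √(F i)` of the radicals. -/
theorem internal_radical_eq_inter_internal_primes
    {I : Type*} (𝒰 : Ultrafilter I) (h𝒰 : ∀ i : I, 𝒰 ≠ pure i)
    (R : I → Type*) [∀ i, CommRing (R i)]
    (J : Ideal (Π i, R i))
    (hJ : ∀ x : Π i, R i, x ∈ J ↔ ∀ᶠ i in (𝒰 : Filter I), x i = 0)
    (F : Π i, Ideal (R i)) (𝔍 : Ideal ((Π i, R i) ⧸ J))
    (h𝔍 : ∀ x : Π i, R i,
      Ideal.Quotient.mk J x ∈ 𝔍 ↔ ∀ᶠ i in (𝒰 : Filter I), x i ∈ F i) :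
    {f : (Π i, R i) ⧸ J | ∃ (x : Π i, R i) (m : I → ℕ),
        f = Ideal.Quotient.mk J x ∧
        Ideal.Quotient.mk J (fun i => x i ^ m i) ∈ 𝔍} =
      (⋂ (P : Ideal ((Π i, R i) ⧸ J))
        (_ : P.IsPrime ∧ IsInternalIdeal 𝒰 J P ∧ 𝔍 ≤ P),
          (P : Set ((Π i, R i) ⧸ J))) ∧
    {f : (Π i, R i) ⧸ J | ∃ (x : Π i, R i) (m : I → ℕ),
        f = Ideal.Quotient.mk J x ∧
        Ideal.Quotient.mk J (fun i => x i ^ m i) ∈ 𝔍} =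
      {f : (Π i, R i) ⧸ J | ∃ x : Π i, R i,
        f = Ideal.Quotient.mk J x ∧ ∀ᶠ i in (𝒰 : Filter I), x i ∈ (F i).radical} := by
  classical
  -- Second equality: the internal radical is the ultraproduct of the radicals.
  have key2 : {f : (Π i, R i) ⧸ J | ∃ (x : Π i, R i) (m : I → ℕ),
        f = Ideal.Quotient.mk J x ∧
        Ideal.Quotient.mk J (fun i => x i ^ m i) ∈ 𝔍} =
      {f : (Π i, R i) ⧸ J | ∃ x : Π i, R i,
        f = Ideal.Quotient.mk J x ∧ ∀ᶠ i in (𝒰 : Filter I), x i ∈ (F i).radical} := by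
    ext f
    constructor
    · rintro ⟨x, m, rfl, hm⟩
      refine ⟨x, rfl, ((h𝔍 _).1 hm).mono fun i hi => ⟨m i, hi⟩⟩
    · rintro ⟨x, rfl, hx⟩
      refine ⟨x, fun i => if h : ∃ n : ℕ, x i ^ n ∈ F i then h.choose else 0, rfl, ?_⟩
      refine (h𝔍 _).2 (hx.mono fun i hi => ?_)
      obtain ⟨n, hn⟩ := hi
      have h : ∃ n : ℕ, x i ^ n ∈ F i := ⟨n, hn⟩
      simpa [dif_pos h] using h.choose_spec
  refine ⟨?_, key2⟩
  rw [key2]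
  apply Set.eq_of_subset_of_subset
  · -- the ultraproduct of radicals is contained in every internal prime containing 𝔍
    rintro f hf
    obtain ⟨x, rfl, hx⟩ := hf
    simp only [Set.mem_iInter]
    rintro P ⟨hP, ⟨G, hG⟩, hle⟩
    have hprime : ∀ᶠ i in (𝒰 : Filter I), (G i).IsPrime :=
      ae_prime_of_internal_prime 𝒰 J P hP G hG
    -- a.e. F i ≤ G i
    have hFG : ∀ᶠ i in (𝒰 : Filter I), F i ≤ G i := by
      by_contra hc
      have hB : ∀ᶠ i in (𝒰 : Filter I), ¬ F i ≤ G i := Ultrafilter.eventually_not.2 hc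
      set y : Π i, R i := fun i =>
        if h : ∃ z : R i, z ∈ F i ∧ z ∉ G i then h.choose else 0
      have hy : ∀ᶠ i in (𝒰 : Filter I), y i ∈ F i ∧ y i ∉ G i := by
        refine hB.mono fun i hi => ?_
        have h : ∃ z : R i, z ∈ F i ∧ z ∉ G i := by
          simpa [SetLike.le_def, not_forall] using hi
        simpa [y, dif_pos h] using h.choose_spec
      have : Ideal.Quotient.mk J y ∈ P := hle ((h𝔍 y).2 (hy.mono fun i hi => hi.1))
      have := ((hG y).1 this).and hy
      exact this.exists.elim fun i hi => hi.2.2 hi.1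
    have : ∀ᶠ i in (𝒰 : Filter I), x i ∈ G i := by
      filter_upwards [hx, hprime, hFG] with i h1 h2 h3
      obtain ⟨n, hn⟩ := h1
      exact h2.mem_of_pow_mem n (h3 hn)
    exact (hG x).2 this
  · -- conversely: anything outside the ultraproduct of radicals is avoided by some internal prime
    intro f hf
    by_contra hnot
    obtain ⟨x, rfl⟩ := Ideal.Quotient.mk_surjective f
    have hx : ¬ ∀ᶠ i in (𝒰 : Filter I), x i ∈ (F i).radical := fun h => hnot ⟨x, rfl, h⟩
    have hB : ∀ᶠ i in (𝒰 : Filter I), x i ∉ (F i).radical :=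
      Ultrafilter.eventually_not.2 hx
    -- choose primes witnessing non-membership in the radical
    set G : Π i, Ideal (R i) := fun i =>
      if h : ∃ Q : Ideal (R i), (F i ≤ Q ∧ Q.IsPrime) ∧ x i ∉ Q then h.choose else ⊤
    have hGspec : ∀ᶠ i in (𝒰 : Filter I), F i ≤ G i ∧ (G i).IsPrime ∧ x i ∉ G i := by
      refine hB.mono fun i hi => ?_
      have h : ∃ Q : Ideal (R i), (F i ≤ Q ∧ Q.IsPrime) ∧ x i ∉ Q := by
        rw [Ideal.radical_eq_sInf, Submodule.mem_sInf] at hi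
        push_neg at hi
        obtain ⟨Q, hQ1, hQ2⟩ := hi
        exact ⟨Q, hQ1, hQ2⟩
      simp only [G, dif_pos h]
      exact ⟨h.choose_spec.1.1, h.choose_spec.1.2, h.choose_spec.2⟩
    -- the internal ideal determined by G, upstairs
    set Q : Ideal (Π i, R i) :=
      { carrier := {y | ∀ᶠ i in (𝒰 : Filter I), y i ∈ G i}
        zero_mem' := Eventually.of_forall fun i => (G i).zero_mem
        add_mem' := fun ha hb => (ha.and hb).mono fun i hi => (G i).add_mem hi.1 hi.2
        smul_mem' := fun c y hy => hy.mono fun i hi => (G i).smul_mem (c i) hi }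
    have hQmem : ∀ y : Π i, R i, y ∈ Q ↔ ∀ᶠ i in (𝒰 : Filter I), y i ∈ G i := fun _ => Iff.rfl
    have hJQ : J ≤ Q := by
      intro y hy
      exact ((hJ y).1 hy).mono fun i hi => hi ▸ (G i).zero_mem
    set P : Ideal ((Π i, R i) ⧸ J) := Q.map (Ideal.Quotient.mk J)
    have hPmem : ∀ y : Π i, R i,
        Ideal.Quotient.mk J y ∈ P ↔ ∀ᶠ i in (𝒰 : Filter I), y i ∈ G i := fun y =>
      Ideal.mem_quotient_iff_mem hJQ
    have hPprime : P.IsPrime := by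
      constructor
      · intro htop
        have h1 : Ideal.Quotient.mk J (1 : Π i, R i) ∈ P := by
          rw [map_one]; exact (Ideal.eq_top_iff_one P).1 htop
        have := ((hPmem 1).1 h1).and hGspec
        exact this.exists.elim fun i hi =>
          hi.2.2.1.ne_top ((Ideal.eq_top_iff_one _).2 hi.1)
      · intro u v huv
        obtain ⟨a, rfl⟩ := Ideal.Quotient.mk_surjective u
        obtain ⟨b, rfl⟩ := Ideal.Quotient.mk_surjective v
        rw [← map_mul] at huv
        have h := ((hPmem (a * b)).1 huv).and hGspec
        have : ∀ᶠ i in (𝒰 : Filter I), a i ∈ G i ∨ b i ∈ G i :=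
          h.mono fun i hi => hi.2.2.1.mem_or_mem hi.1
        rcases Ultrafilter.eventually_or.1 this with h | h
        · exact Or.inl ((hPmem a).2 h)
        · exact Or.inr ((hPmem b).2 h)
    have hInternal : IsInternalIdeal 𝒰 J P := ⟨G, hPmem⟩
    have h𝔍P : 𝔍 ≤ P := by
      intro u hu
      obtain ⟨y, rfl⟩ := Ideal.Quotient.mk_surjective u
      refine (hPmem y).2 ?_
      filter_upwards [(h𝔍 y).1 hu, hGspec] with i h1 h2 using h2.1 h1
    have hxP : Ideal.Quotient.mk J x ∈ P := by
      have := hf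
      simp only [Set.mem_iInter] at this
      exact this P ⟨hPprime, hInternal, h𝔍P⟩
    have := ((hPmem x).1 hxP).and hGspec
    exact this.exists.elim fun i hi => hi.2.2.2 hi.1
end

section
/- Let X be a Stein complex space with A = Γ(X, 𝒪_X) and 𝔭 ⊆ A a prime ideal. Then 𝔭 = Id({x}) for some point x ∈ *X (where Id({x}) = {f ∈ A : *f(x) = 0}) if and only if 𝔭 satisfies the nonstandard Nullstellensatz Id(V(𝔭)) = 𝔭, where V(𝔭) = {x ∈ *X : *f(x)=0 ∀ f ∈ 𝔭}. -/
open Filter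

/-- **Theorem 5.1.3 (ii): prime ideals as ideals of nonstandard points.**
Let `X` be a Stein complex space with `A = Γ(X, 𝒪_X)` (abstracted as a commutative
ring `A` of `ℂ`-valued functions on `X` via the evaluation homomorphism `ev`) and
`𝔭 ⊆ A` a prime ideal.  Realize the enlargement `*X` as the ultrapower of `X` along
an ultrafilter `𝒰` on `Finset A` containing all up-sets (the concurrence principle);
a point of `*X` is a function `x : Finset A → X`, and `*f(x) = 0` means
`ev f (x F) = 0` `𝒰`-a.e.  Then `𝔭 = Id({x})` for some point `x ∈ *X`
(i.e. `f ∈ 𝔭 ↔ *f(x) = 0`) if and only if `𝔭` satisfies the nonstandard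
Nullstellensatz `Id(V(𝔭)) = 𝔭`, i.e. every `g ∈ A` vanishing at all points of
`V(𝔭) = {x ∈ *X | *f(x) = 0 ∀ f ∈ 𝔭}` belongs to `𝔭`. -/
theorem prime_is_pointIdeal_iff_nullstellensatz
    (X : Type*) (A : Type*) [CommRing A] (ev : A →+* (X → ℂ))
    (𝔭 : Ideal A) (h𝔭 : 𝔭.IsPrime)
    (𝒰 : Ultrafilter (Finset A))
    (h𝒰 : ∀ F₀ : Finset A, ∀ᶠ F in (𝒰 : Filter (Finset A)), F₀ ⊆ F) :
    (∃ x : Finset A → X, ∀ f : A,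
        f ∈ 𝔭 ↔ ∀ᶠ F in (𝒰 : Filter (Finset A)), ev f (x F) = 0) ↔
    (∀ g : A,
      (∀ x : Finset A → X,
        (∀ f ∈ 𝔭, ∀ᶠ F in (𝒰 : Filter (Finset A)), ev f (x F) = 0) →
        ∀ᶠ F in (𝒰 : Filter (Finset A)), ev g (x F) = 0) →
      g ∈ 𝔭) := by
  constructor
  · rintro ⟨x, hx⟩ g hg
    exact (hx g).2 (hg x fun f hf => (hx f).1 hf)
  · intro h
    classical
    -- For each finite set F, find a common zero of F ∩ 𝔭 where the product of
    -- the elements of F outside 𝔭 does not vanish.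
    have claim : ∀ F : Finset A, ∃ p : X,
        (∀ f ∈ F, f ∈ 𝔭 → ev f p = 0) ∧
        ev ((F.filter (fun g => g ∉ 𝔭)).prod (fun g => g)) p ≠ 0 := by
      intro F
      by_contra hc
      push_neg at hc
      have hmem : (F.filter (fun g => g ∉ 𝔭)).prod (fun g => g) ∈ 𝔭 := by
        apply h
        intro x hx
        have hev : ∀ᶠ F' in (𝒰 : Filter (Finset A)),
            ∀ f ∈ F, f ∈ 𝔭 → ev f (x F') = 0 := by
          rw [Filter.eventually_all_finset]
          intro f hfF
          by_cases hf𝔭 : f ∈ 𝔭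
          · exact (hx f hf𝔭).mono fun F' h' _ => h'
          · exact Filter.Eventually.of_forall fun F' h' => absurd h' hf𝔭
        exact hev.mono fun F' h' => hc (x F') h'
      rcases (Ideal.IsPrime.prod_mem_iff_exists_mem h𝔭 _).1 hmem with ⟨q, hq, hq𝔭⟩
      exact (Finset.mem_filter.1 hq).2 hq𝔭
    choose x hx1 hx2 using claim
    refine ⟨x, fun f => ⟨fun hf => ?_, fun hev => ?_⟩⟩
    · exact (h𝒰 {f}).mono fun F hF =>
        hx1 F f (hF (Finset.mem_singleton_self f)) hf
    · by_contra hf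
      have hne : ∀ᶠ F in (𝒰 : Filter (Finset A)), ev f (x F) ≠ 0 := by
        refine (h𝒰 {f}).mono fun F hF h0 => hx2 F ?_
        have hfmem : f ∈ F.filter (fun g => g ∉ 𝔭) :=
          Finset.mem_filter.2 ⟨hF (Finset.mem_singleton_self f), hf⟩
        obtain ⟨c, hc⟩ := Finset.dvd_prod_of_mem (fun g => g) hfmem
        rw [hc, map_mul]
        simp [Pi.mul_apply, h0]
      rcases (hne.and hev).exists with ⟨F, hF1, hF2⟩
      exact hF1 hF2
end
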